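/- arXiv:2602.20302 — 2 statements merged into one kernel-verified Lean document; each statement's English description precedes it below -/
import Mathlib

section
/- Let ν be a probability measure on a compact topological space X and let F : X → ℝ ∪ {+∞} be measurable and bounded below. Set ν̂ = e^{-F} ν. Suppose there exists p > 1 with ∫_X e^{-pF} dν = C < ∞. Then for every probability measure μ on X with finite relative entropy with respect to ν̂, one has Ent(μ|ν) ≤ (p/(p-1)) Ent(μ|ν̂) + (log C)/(p-1). -/
open MeasureTheory Real

/-!
Writing `ν̂ = e^{-F} ν`, one has `log (dμ/dν̂) = F + log (dμ/dν)`, so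
`Ent(μ|ν̂) = Ent(μ|ν) + ∫ F dμ`. The Donsker–Varadhan bound with `g = -pF`, which is Gibbs'
inequality for `μ` against the tilted measure `e^{-pF} ν / C`, gives
`-p ∫ F dμ ≤ log C + Ent(μ|ν)`. Eliminating `∫ F dμ` between the two yields
`(p - 1) Ent(μ|ν) ≤ p Ent(μ|ν̂) + log C`.
-/

section

variable {X : Type*} [MeasurableSpace X] {μ ν : Measure X}

lemma llr_withDensity_exp_neg [SigmaFinite μ] [SigmaFinite ν] {F : X → ℝ}
    (hF : AEMeasurable F ν) (hμν : μ ≪ ν) :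
    llr μ (ν.withDensity fun x => ENNReal.ofReal (exp (-F x))) =ᵐ[μ]
      fun x => F x + llr μ ν x := by
  have hdens := Measure.rnDeriv_withDensity_right μ ν (f := fun x => ENNReal.ofReal (exp (-F x)))
    (by fun_prop) (ae_of_all _ fun x => by simp [exp_pos]) (ae_of_all _ fun x => by simp)
  filter_upwards [hμν.ae_le hdens, Measure.rnDeriv_pos hμν,
    hμν.ae_le (Measure.rnDeriv_lt_top μ ν)] with x hx hx_pos hx_lt_top
  have hrn : (μ.rnDeriv ν x).toReal ≠ 0 := ENNReal.toReal_ne_zero.mpr ⟨hx_pos.ne', hx_lt_top.ne⟩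
  rw [llr, hx, ENNReal.toReal_mul, ENNReal.toReal_inv, ENNReal.toReal_ofReal (exp_pos _).le,
    log_mul (inv_ne_zero (exp_pos _).ne') hrn, log_inv, log_exp, neg_neg, llr]

lemma integral_le_log_integral_exp_add_integral_llr [IsProbabilityMeasure μ] [SigmaFinite ν]
    {g : X → ℝ} (hμν : μ ≪ ν) (hgμ : Integrable g μ) (hgν : Integrable (fun x => exp (g x)) ν)
    (h_int : Integrable (llr μ ν) μ) :
    ∫ x, g x ∂μ ≤ log (∫ x, exp (g x) ∂ν) + ∫ x, llr μ ν x ∂μ := by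
  have : NeZero ν := ⟨fun h => IsProbabilityMeasure.ne_zero μ
    (Measure.absolutelyContinuous_zero_iff.mp (h ▸ hμν))⟩
  have : IsProbabilityMeasure (ν.tilted g) := isProbabilityMeasure_tilted hgν
  have hgibbs := InformationTheory.integral_llr_add_sub_measure_univ_nonneg
    (hμν.trans (absolutelyContinuous_tilted hgν)) (integrable_llr_tilted_right hμν hgμ h_int hgν)
  rw [integral_llr_tilted_right hμν hgμ hgν h_int] at hgibbs
  simp only [probReal_univ] at hgibbs
  linarith

end

theorem entropy_stability_general
    {X : Type*} [MeasurableSpace X]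
    (ν μ : Measure X) [IsProbabilityMeasure ν] [IsProbabilityMeasure μ]
    (F : X → ℝ) (hF : Measurable F)
    (p C : ℝ) (hp : 1 < p)
    (hexp : Integrable (fun x => Real.exp (-p * F x)) ν)
    (hC : ∫ x, Real.exp (-p * F x) ∂ν = C)
    (hac : μ ≪ ν.withDensity (fun x => ENNReal.ofReal (Real.exp (-F x))))
    (hEnt : Integrable (llr μ (ν.withDensity (fun x => ENNReal.ofReal (Real.exp (-F x))))) μ)
    (hIntF : Integrable F μ) :
    ∫ x, llr μ ν x ∂μ
      ≤ (p / (p - 1)) *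
          ∫ x, llr μ (ν.withDensity (fun x => ENNReal.ofReal (Real.exp (-F x)))) x ∂μ
        + Real.log C / (p - 1) := by
  have hμν : μ ≪ ν := hac.trans (withDensity_absolutelyContinuous _ _)
  have hllr := llr_withDensity_exp_neg hF.aemeasurable hμν
  have hEnt_ν : Integrable (llr μ ν) μ :=
    (hEnt.sub hIntF).congr (by filter_upwards [hllr] with x hx; simp [hx])
  have hEnt_eq : ∫ x, llr μ (ν.withDensity fun x => ENNReal.ofReal (exp (-F x))) x ∂μ
      = ∫ x, F x ∂μ + ∫ x, llr μ ν x ∂μ := by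
    rw [integral_congr_ae hllr, integral_add hIntF hEnt_ν]
  have hDV := integral_le_log_integral_exp_add_integral_llr hμν (hIntF.const_mul (-p)) hexp hEnt_ν
  rw [hC, integral_const_mul] at hDV
  rw [hEnt_eq, div_mul_eq_mul_div, ← add_div, le_div_iff₀ (by linarith)]
  linarith

/-- Entropy stability: let `ν` be a probability measure on a compact space `X`, `F`
measurable and bounded below, `ν̂ = e^{-F} ν`. If `∫ e^{-pF} dν = C < ∞` for some `p > 1`,
then for every probability measure `μ` with finite relative entropy with respect to `ν̂`,
`Ent(μ|ν) ≤ (p/(p-1)) Ent(μ|ν̂) + (log C)/(p-1)`, where `Ent(μ|ρ) = ∫ llr μ ρ dμ`. -/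
theorem entropy_stability
    {X : Type*} [TopologicalSpace X] [CompactSpace X] [MeasurableSpace X]
    (ν μ : Measure X) [IsProbabilityMeasure ν] [IsProbabilityMeasure μ]
    (F : X → ℝ) (hF : Measurable F) (hFbdd : BddBelow (Set.range F))
    (p C : ℝ) (hp : 1 < p)
    (hexp : Integrable (fun x => Real.exp (-p * F x)) ν)
    (hC : ∫ x, Real.exp (-p * F x) ∂ν = C)
    (hac : μ ≪ ν.withDensity (fun x => ENNReal.ofReal (Real.exp (-F x))))
    (hEnt : Integrable (llr μ (ν.withDensity (fun x => ENNReal.ofReal (Real.exp (-F x))))) μ)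
    (hIntF : Integrable F μ) :
    ∫ x, llr μ ν x ∂μ
      ≤ (p / (p - 1)) *
          ∫ x, llr μ (ν.withDensity (fun x => ENNReal.ofReal (Real.exp (-F x)))) x ∂μ
        + Real.log C / (p - 1) :=
  entropy_stability_general ν μ F hF p C hp hexp hC hac hEnt hIntF
end

section
/- Let f be a smooth function on a neighborhood of the closed disk of radius ε₀ in ℂ, and let g be a smooth nonvanishing bounded function on the punctured disk such that |z ∂g/(g ∂z)| → 0 as z → 0. Then lim_{ε → 0} ∫_{∂𝔻_ε} f d log|g|² = 0, where ∂𝔻_ε is the positively oriented circle of radius ε. -/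
open MeasureTheory Real Filter

/-- The Wirtinger derivative `∂g/∂z = (1/2)(∂_x - i ∂_y) g` of a (real-)differentiable
function `g : ℂ → ℂ`. -/
noncomputable def wirtingerDeriv (g : ℂ → ℂ) (z : ℂ) : ℂ :=
  (1 / 2) * (fderiv ℝ g z 1 - Complex.I * fderiv ℝ g z Complex.I)

private lemma vcf_div_re (w u : ℂ) : (w/u).re = ((starRingEnd ℂ u) * w).re / Complex.normSq u := by
  simp [Complex.div_re, Complex.mul_re, Complex.conj_re, Complex.conj_im]; ring

private lemma vcf_div_im (w u : ℂ) : (w/u).im = ((starRingEnd ℂ u) * w).im / Complex.normSq u := by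
  simp [Complex.div_im, Complex.mul_im, Complex.conj_re, Complex.conj_im]; ring

private lemma vcf_wirtinger_id (D : ℂ →L[ℝ] ℂ) (z u : ℂ) :
    (D z / u).re + (D (z * Complex.I) / u).im
      = 2 * ((z * ((1/2) * (D 1 - Complex.I * D Complex.I)) / u)).re := by
  have h1 : D z = z.re • D 1 + z.im • D Complex.I := by
    conv_lhs => rw [show z = z.re • (1:ℂ) + z.im • Complex.I by
      simp [Complex.real_smul, Complex.re_add_im]]
    rw [map_add, _root_.map_smul, _root_.map_smul]
  have h2 : D (z * Complex.I) = (-z.im) • D 1 + z.re • D Complex.I := by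
    conv_lhs => rw [show z * Complex.I = (-z.im) • (1:ℂ) + z.re • Complex.I by
      simp [Complex.real_smul, Complex.ext_iff]]
    rw [map_add, _root_.map_smul, _root_.map_smul]
  rw [h1, h2]
  simp [Complex.div_re, Complex.div_im, Complex.mul_re, Complex.mul_im, Complex.add_re,
    Complex.add_im, Complex.sub_re, Complex.sub_im, Complex.smul_re, Complex.smul_im]
  ring

set_option maxHeartbeats 4000000

/-- Variant of Cauchy's formula: if `f` is smooth near the closed disk of radius `ε₀`,
`g` is smooth, nonvanishing and bounded on the punctured disk with
`|z ∂g/(g ∂z)| → 0` as `z → 0`, then `∫_{∂𝔻_ε} f d log|g|² → 0` as `ε → 0⁺`,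
where the circle integral is computed via the parametrization `θ ↦ ε e^{iθ}`. -/
theorem variant_cauchy_formula
    (ε₀ : ℝ) (hε₀ : 0 < ε₀)
    (f : ℂ → ℝ) (U : Set ℂ) (hU : IsOpen U) (hUsub : Metric.closedBall 0 ε₀ ⊆ U)
    (hf : ContDiffOn ℝ (⊤ : ℕ∞) f U)
    (g : ℂ → ℂ)
    (hg : ContDiffOn ℝ (⊤ : ℕ∞) g (Metric.closedBall 0 ε₀ \ {0}))
    (hg0 : ∀ z ∈ Metric.closedBall (0:ℂ) ε₀ \ {0}, g z ≠ 0)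
    (B : ℝ) (hgB : ∀ z ∈ Metric.closedBall (0:ℂ) ε₀ \ {0}, ‖g z‖ ≤ B)
    (hlim : Tendsto (fun z : ℂ => ‖z * wirtingerDeriv g z / g z‖)
      (nhdsWithin 0 {(0:ℂ)}ᶜ) (nhds 0)) :
    Tendsto (fun ε : ℝ =>
        ∫ θ in (0:ℝ)..(2 * π),
          f (ε * Complex.exp (θ * Complex.I)) *
            deriv (fun t : ℝ =>
              Real.log (‖g (ε * Complex.exp (t * Complex.I))‖ ^ 2)) θ)
      (nhdsWithin 0 (Set.Ioo 0 ε₀)) (nhds 0) := by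
  have pi_pos := Real.pi_pos
  -- the punctured open disk
  set V : Set ℂ := Metric.ball (0:ℂ) ε₀ \ {0} with hVdef
  have hVopen : IsOpen V := Metric.isOpen_ball.sdiff isClosed_singleton
  have hVsub : V ⊆ Metric.closedBall 0 ε₀ \ {0} :=
    Set.diff_subset_diff Metric.ball_subset_closedBall subset_rfl
  have hgV : ContDiffOn ℝ (⊤ : ℕ∞) g V := hg.mono hVsub
  have hgne : ∀ z ∈ V, g z ≠ 0 := fun z hz => hg0 z (hVsub hz)
  set D : ℂ → (ℂ →L[ℝ] ℂ) := fderiv ℝ g with hDdef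
  set L : ℂ → ℝ := fun z => Real.log ((‖g z‖)^2) with hLdef
  set Vt : ℂ → ℝ := fun z => ((D z) (z * Complex.I) / g z).im with hVtdef
  set Lt : ℂ → ℝ := fun z => 2 * ((D z) (z * Complex.I) / g z).re with hLtdef
  set Pf : ℝ → ℝ → ℝ := fun r θ =>
    2 * ((D (circleMap 0 r θ)) (Complex.exp (θ * Complex.I)) / g (circleMap 0 r θ)).re
    with hPfdef
  set M : ℝ → ℝ := fun r => ∫ θ in (0:ℝ)..(2*π), L (circleMap 0 r θ) with hMdef
  set W : ℝ → ℝ := fun r => ∫ θ in (0:ℝ)..(2*π), Vt (circleMap 0 r θ) with hWdef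
  have hmemV : ∀ {r : ℝ}, 0 < r → r < ε₀ → ∀ (θ : ℝ), circleMap 0 r θ ∈ V := by
    intro r hr hr' θ
    constructor
    · simp only [Metric.mem_ball, dist_zero_right,
        norm_circleMap_zero, abs_of_pos hr]
      exact hr'
    · simpa using circleMap_ne_center (c := 0) (ne_of_gt hr) (θ := θ)
  have hDat : ∀ z ∈ V, HasFDerivAt g (D z) z := fun z hz =>
    ((hgV.contDiffAt (hVopen.mem_nhds hz)).differentiableAt (by simp)).hasFDerivAt
  have hContg : ContinuousOn g V := hgV.continuousOn
  have hContD : ContinuousOn D V := hgV.continuousOn_fderiv_of_isOpen hVopen (by simp)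
  -- master continuity on the product space
  have master2 : ContinuousOn (fun q : ℂ × ℂ => (D q.1) q.2 / g q.1) (V ×ˢ Set.univ) := by
    have h1 : ContinuousOn (fun q : ℂ × ℂ => q.1) (V ×ˢ Set.univ) := continuousOn_fst
    have hmap : ∀ q ∈ V ×ˢ (Set.univ : Set ℂ), q.1 ∈ V := fun q hq => hq.1
    exact ((hContD.comp h1 hmap).clm_apply continuousOn_snd).div
      (hContg.comp h1 hmap) (fun q hq => hgne q.1 hq.1)
  -- curve derivative of g along the circle
  have hGd : ∀ {r : ℝ}, 0 < r → r < ε₀ → ∀ (θ : ℝ),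
      HasDerivAt (fun t => g (circleMap 0 r t))
        ((D (circleMap 0 r θ)) (circleMap 0 r θ * Complex.I)) θ := by
    intro r hr hr' θ
    exact (hDat _ (hmemV hr hr' θ)).comp_hasDerivAt θ (hasDerivAt_circleMap 0 r θ)
  -- angular derivative of L along the circle
  have hLd : ∀ {r : ℝ}, 0 < r → r < ε₀ → ∀ (θ : ℝ),
      HasDerivAt (fun t => L (circleMap 0 r t)) (Lt (circleMap 0 r θ)) θ := by
    intro r hr hr' θ
    set z := circleMap 0 r θ with hz
    have hzV : z ∈ V := hmemV hr hr' θ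
    have hgz : g z ≠ 0 := hgne z hzV
    have hN : Complex.normSq (g z) ≠ 0 := by simpa [Complex.normSq_eq_zero] using hgz
    have hG := hGd hr hr' θ
    -- derivative of t ↦ normSq (g (circleMap 0 r t))
    have hre : HasDerivAt (fun t => (g (circleMap 0 r t)).re)
        ((D z (z * Complex.I)).re) θ :=
      Complex.reCLM.hasFDerivAt.comp_hasDerivAt θ hG
    have him : HasDerivAt (fun t => (g (circleMap 0 r t)).im)
        ((D z (z * Complex.I)).im) θ :=
      Complex.imCLM.hasFDerivAt.comp_hasDerivAt θ hG
    have hns : HasDerivAt (fun t => Complex.normSq (g (circleMap 0 r t)))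
        (2 * ((starRingEnd ℂ (g z)) * (D z (z * Complex.I))).re) θ := by
      have := (hre.mul hre).add (him.mul him)
      have heq : ∀ w : ℂ, Complex.normSq w = w.re * w.re + w.im * w.im := fun w =>
        Complex.normSq_apply w
      simp only [heq]
      refine this.congr_deriv ?_
      simp [Complex.mul_re, Complex.conj_re, Complex.conj_im]
      ring
    have hlog := hns.log (by simpa [Complex.normSq_eq_zero] using hgz)
    have : HasDerivAt (fun t => Real.log (Complex.normSq (g (circleMap 0 r t))))
        (Lt z) θ := by
      convert hlog using 1
      rw [hLtdef]
      simp only [← hz, vcf_div_re]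
      field_simp
    simpa only [hLdef, Complex.sq_norm] using this
  -- radial derivative of L
  have hLr : ∀ {r : ℝ}, 0 < r → r < ε₀ → ∀ (θ : ℝ),
      HasDerivAt (fun s => L (circleMap 0 s θ)) (Pf r θ) r := by
    intro r hr hr' θ
    set z := circleMap 0 r θ with hz
    have hzV : z ∈ V := hmemV hr hr' θ
    have hgz : g z ≠ 0 := hgne z hzV
    have hcm : HasDerivAt (fun s : ℝ => circleMap 0 s θ) (Complex.exp (θ * Complex.I)) r := by
      have : HasDerivAt (fun s : ℝ => (s:ℂ)) 1 r := Complex.ofRealCLM.hasDerivAt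
      have := this.mul_const (Complex.exp (θ * Complex.I))
      simpa [circleMap] using this
    have hG : HasDerivAt (fun s => g (circleMap 0 s θ))
        ((D z) (Complex.exp (θ * Complex.I))) r :=
      (hDat _ hzV).comp_hasDerivAt r hcm
    have hre : HasDerivAt (fun s => (g (circleMap 0 s θ)).re)
        ((D z (Complex.exp (θ * Complex.I))).re) r :=
      Complex.reCLM.hasFDerivAt.comp_hasDerivAt r hG
    have him : HasDerivAt (fun s => (g (circleMap 0 s θ)).im)
        ((D z (Complex.exp (θ * Complex.I))).im) r :=
      Complex.imCLM.hasFDerivAt.comp_hasDerivAt r hG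
    have hns : HasDerivAt (fun s => Complex.normSq (g (circleMap 0 s θ)))
        (2 * ((starRingEnd ℂ (g z)) * (D z (Complex.exp (θ * Complex.I)))).re) r := by
      have := (hre.mul hre).add (him.mul him)
      have heq : ∀ w : ℂ, Complex.normSq w = w.re * w.re + w.im * w.im := fun w =>
        Complex.normSq_apply w
      simp only [heq]
      refine this.congr_deriv ?_
      simp [Complex.mul_re, Complex.conj_re, Complex.conj_im]
      ring
    have hlog := hns.log (by simpa [Complex.normSq_eq_zero] using hgz)
    have : HasDerivAt (fun s => Real.log (Complex.normSq (g (circleMap 0 s θ))))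
        (Pf r θ) r := by
      convert hlog using 1
      rw [hPfdef]
      simp only [← hz, vcf_div_re]
      field_simp
    simpa only [hLdef, Complex.sq_norm] using this
  -- key pointwise identity
  have hkey : ∀ {r : ℝ}, 0 < r → r < ε₀ → ∀ (θ : ℝ),
      r * Pf r θ + 2 * Vt (circleMap 0 r θ)
        = 4 * (circleMap 0 r θ * wirtingerDeriv g (circleMap 0 r θ)
            / g (circleMap 0 r θ)).re := by
    intro r hr hr' θ
    set z := circleMap 0 r θ with hz
    have hrz : (r : ℂ) * Complex.exp (θ * Complex.I) = z := by simp [hz, circleMap]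
    have hscale : (r : ℝ) • Complex.exp (θ * Complex.I) = z := by
      rw [Complex.real_smul, hrz]
    have hDz : (D z) z = r • (D z) (Complex.exp (θ * Complex.I)) := by
      rw [← _root_.map_smul, hscale]
    have hwid := vcf_wirtinger_id (D z) z (g z)
    have hW : wirtingerDeriv g z = (1/2) * ((D z) 1 - Complex.I * (D z) Complex.I) := rfl
    rw [hPfdef, hVtdef, hW]
    have hsm : ((r:ℝ) • (D z) (Complex.exp (θ * Complex.I)) / g z).re
        = r * ((D z) (Complex.exp (θ * Complex.I)) / g z).re := by
      rw [Complex.real_smul, mul_div_assoc]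
      simp [Complex.mul_re]
    have := hwid
    rw [hDz] at this
    rw [hsm] at this
    linarith [this]
  -- choose the half radius
  set ε₁ : ℝ := ε₀ / 2 with hε₁def
  have hε₁pos : 0 < ε₁ := by positivity
  have hε₁lt : ε₁ < ε₀ := by
    rw [hε₁def]; linarith
  -- continuity of the Wirtinger quotient
  have hφC : ContinuousOn (fun z => z * wirtingerDeriv g z / g z) V := by
    have hw : ContinuousOn (wirtingerDeriv g) V := by
      apply ContinuousOn.mul continuousOn_const
      exact (hContD.clm_apply continuousOn_const).sub
        (continuousOn_const.mul (hContD.clm_apply continuousOn_const))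
    exact (continuousOn_id.mul hw).div hContg hgne
  have hwcont : ContinuousOn (fun z => ‖z * wirtingerDeriv g z / g z‖) V :=
    continuous_norm.comp_continuousOn hφC
  -- uniform bound for |z ∂g/(g ∂z)| on the punctured disk of radius ε₁
  have hΔ : ∃ Δ : ℝ, 0 ≤ Δ ∧ ∀ z ∈ V, ‖z‖ ≤ ε₁ →
      ‖z * wirtingerDeriv g z / g z‖ ≤ Δ := by
    have h1 : {z : ℂ | ‖z * wirtingerDeriv g z / g z‖ < 1}
        ∈ nhdsWithin (0:ℂ) {(0:ℂ)}ᶜ := hlim (Iio_mem_nhds one_pos)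
    rw [Metric.mem_nhdsWithin_iff] at h1
    obtain ⟨δ, hδpos, hδ⟩ := h1
    set K : Set ℂ := Metric.closedBall 0 ε₁ \ Metric.ball 0 δ with hKdef
    have hKcpt : IsCompact K := (isCompact_closedBall _ _).diff Metric.isOpen_ball
    have hKV : K ⊆ V := by
      intro z hz
      obtain ⟨hz1, hz2⟩ := hz
      constructor
      · exact lt_of_le_of_lt (Metric.mem_closedBall.mp hz1) hε₁lt
      · simp only [Set.mem_singleton_iff]
        intro h0
        exact hz2 (by simp [h0, hδpos])
    obtain ⟨C, hC⟩ := hKcpt.exists_bound_of_continuousOn (hwcont.mono hKV)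
    refine ⟨max C 1, le_trans zero_le_one (le_max_right _ _), ?_⟩
    intro z hzV hzle
    by_cases hcase : ‖z‖ < δ
    · have : z ∈ Metric.ball (0:ℂ) δ ∩ {(0:ℂ)}ᶜ := by
        constructor
        · simpa [Complex.dist_eq] using hcase
        · exact hzV.2
      exact le_trans (le_of_lt (hδ this)) (le_max_right _ _)
    · have hzK : z ∈ K := by
        constructor
        · simpa [Complex.dist_eq] using hzle
        · simpa [Complex.dist_eq] using hcase
      have := hC z hzK
      rw [Real.norm_eq_abs, abs_of_nonneg (norm_nonneg _)] at this
      exact le_trans this (le_max_left _ _)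
  obtain ⟨Δ, hΔ0, hΔb⟩ := hΔ
  -- continuity of (r, θ) ↦ circleMap 0 r θ
  have hΦc : Continuous (fun p : ℝ × ℝ => circleMap 0 p.1 p.2) := by
    simp only [circleMap, zero_add]
    exact (Complex.continuous_ofReal.comp continuous_fst).mul
      ((Complex.continuous_ofReal.comp continuous_snd).mul continuous_const).cexp
  -- continuity in θ of the logarithmic-derivative integrand, for fixed radius
  have hqcont : ∀ {r : ℝ}, 0 < r → r < ε₀ →
      Continuous (fun θ : ℝ =>
        (D (circleMap 0 r θ)) (circleMap 0 r θ * Complex.I) / g (circleMap 0 r θ)) := by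
    intro r hr hr'
    have hmap : ∀ θ : ℝ, ((circleMap 0 r θ, circleMap 0 r θ * Complex.I) : ℂ × ℂ)
        ∈ V ×ˢ Set.univ := fun θ => ⟨hmemV hr hr' θ, Set.mem_univ _⟩
    exact master2.comp_continuous
      ((continuous_circleMap 0 r).prodMk ((continuous_circleMap 0 r).mul continuous_const))
      hmap
  -- the winding number: W r is an integer multiple of 2π
  have hWint : ∀ {r : ℝ}, 0 < r → r < ε₀ → ∃ n : ℤ, W r = 2 * π * n := by
    intro r hr hr'
    set q : ℝ → ℂ := fun θ =>
      (D (circleMap 0 r θ)) (circleMap 0 r θ * Complex.I) / g (circleMap 0 r θ) with hqdef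
    have hq : Continuous q := hqcont hr hr'
    set H : ℝ → ℂ := fun t => ∫ s in (0:ℝ)..t, q s with hHdef
    have hHd : ∀ t : ℝ, HasDerivAt H (q t) t := fun t =>
      intervalIntegral.integral_hasDerivAt_right (hq.intervalIntegrable _ _)
        (hq.stronglyMeasurableAtFilter _ _) hq.continuousAt
    set Kf : ℝ → ℂ := fun t => Complex.exp (-H t) * g (circleMap 0 r t) with hKfdef
    have hKd : ∀ t : ℝ, HasDerivAt Kf 0 t := by
      intro t
      have h1 : HasDerivAt (fun t => Complex.exp (-H t)) (Complex.exp (-H t) * (-q t)) t :=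
        (hHd t).neg.cexp
      have h2 := h1.mul (hGd hr hr' t)
      have hgz : g (circleMap 0 r t) ≠ 0 := hgne _ (hmemV hr hr' t)
      refine h2.congr_deriv ?_
      rw [hqdef]
      field_simp
      ring
    have hconst : Kf (2*π) = Kf 0 :=
      is_const_of_deriv_eq_zero (fun t => (hKd t).differentiableAt)
        (fun t => (hKd t).deriv) _ _
    have hG2π : g (circleMap 0 r (2*π)) = g (circleMap 0 r 0) := by
      congr 1
      have := periodic_circleMap 0 r 0
      simpa using this
    have hH0 : H 0 = 0 := by simp [hHdef]
    have hgz0 : g (circleMap 0 r 0) ≠ 0 := hgne _ (hmemV hr hr' 0)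
    have hexp1 : Complex.exp (-H (2*π)) = 1 := by
      have : Complex.exp (-H (2*π)) * g (circleMap 0 r 0) = g (circleMap 0 r 0) := by
        have := hconst
        rw [hKfdef] at this
        simp only at this
        rw [hG2π] at this
        simpa [hH0] using this
      exact mul_right_cancel₀ hgz0 (by simpa using this)
    obtain ⟨n, hn⟩ := Complex.exp_eq_one_iff.mp hexp1
    refine ⟨-n, ?_⟩
    have hH2π : H (2*π) = (-n : ℂ) * (2 * π * Complex.I) := by
      have : -H (2*π) = n * (2*π*Complex.I) := hn
      push_cast
      linear_combination -this
    have hWim : W r = (H (2*π)).im := by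
      rw [hWdef, hHdef]
      simp only
      rw [intervalIntegral.integral_of_le (by positivity : (0:ℝ) ≤ 2*π),
        intervalIntegral.integral_of_le (by positivity : (0:ℝ) ≤ 2*π)]
      have h5 := integral_im (𝕜 := ℂ) (μ := volume.restrict (Set.Ioc (0:ℝ) (2*π)))
        (f := q) hq.integrableOn_Ioc
      rw [show (fun x : ℝ => Vt (circleMap 0 r x)) = fun x : ℝ => RCLike.im (q x) by
        funext x; simp [hqdef, hVtdef, RCLike.im_to_complex]]
      rw [h5]
      simp [RCLike.im_to_complex]
    rw [hWim, hH2π]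
    simp [Complex.mul_im, Complex.mul_re]
    push_cast
    ring
  -- product continuity of Vt ∘ circleMap on compact radius intervals
  have hVtprod : ∀ {a b : ℝ}, 0 < a → b < ε₀ →
      ContinuousOn (fun p : ℝ × ℝ => Vt (circleMap 0 p.1 p.2))
        (Set.Icc a b ×ˢ (Set.univ : Set ℝ)) := by
    intro a b ha hb
    have hΨ : Continuous (fun p : ℝ × ℝ =>
        ((circleMap 0 p.1 p.2, circleMap 0 p.1 p.2 * Complex.I) : ℂ × ℂ)) :=
      hΦc.prodMk (hΦc.mul continuous_const)
    have hmaps : ∀ p ∈ Set.Icc a b ×ˢ (Set.univ : Set ℝ),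
        ((circleMap 0 p.1 p.2, circleMap 0 p.1 p.2 * Complex.I) : ℂ × ℂ)
          ∈ V ×ˢ (Set.univ : Set ℂ) := by
      intro p hp
      exact ⟨hmemV (lt_of_lt_of_le ha hp.1.1) (lt_of_le_of_lt hp.1.2 hb) p.2, Set.mem_univ _⟩
    have := (master2.comp hΨ.continuousOn hmaps)
    exact Complex.continuous_im.comp_continuousOn this
  -- product continuity of Pf
  have hPfprod : ∀ {a b : ℝ}, 0 < a → b < ε₀ →
      ContinuousOn (fun p : ℝ × ℝ => Pf p.1 p.2)
        (Set.Icc a b ×ˢ (Set.univ : Set ℝ)) := by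
    intro a b ha hb
    have hΨ : Continuous (fun p : ℝ × ℝ =>
        ((circleMap 0 p.1 p.2, Complex.exp (p.2 * Complex.I)) : ℂ × ℂ)) :=
      hΦc.prodMk (((Complex.continuous_ofReal.comp continuous_snd).mul
        continuous_const).cexp)
    have hmaps : ∀ p ∈ Set.Icc a b ×ˢ (Set.univ : Set ℝ),
        ((circleMap 0 p.1 p.2, Complex.exp (p.2 * Complex.I)) : ℂ × ℂ)
          ∈ V ×ˢ (Set.univ : Set ℂ) := by
      intro p hp
      exact ⟨hmemV (lt_of_lt_of_le ha hp.1.1) (lt_of_le_of_lt hp.1.2 hb) p.2, Set.mem_univ _⟩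
    have := (master2.comp hΨ.continuousOn hmaps)
    exact continuous_const.continuousOn.mul (Complex.continuous_re.comp_continuousOn this)
  -- W is constant on (0, ε₁]
  have hWconst : ∀ {r : ℝ}, 0 < r → r ≤ ε₁ → W r = W ε₁ := by
    intro r hr hrle
    set c : ℝ → ℝ := fun x => max r (min x ε₁) with hcdef
    have hccont : Continuous c := continuous_const.max (continuous_id.min continuous_const)
    have hcmem : ∀ x, c x ∈ Set.Icc r ε₁ := fun x =>
      ⟨le_max_left _ _, max_le hrle (min_le_right _ _)⟩
    have hcIoo : ∀ x, c x ∈ Set.Ioo 0 ε₀ := fun x =>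
      ⟨lt_of_lt_of_le hr (hcmem x).1, lt_of_le_of_lt (hcmem x).2 hε₁lt⟩
    have hcr : c r = r := by
      rw [hcdef]; simp [min_eq_left hrle]
    have hcε₁ : c ε₁ = ε₁ := by
      rw [hcdef]; simp [max_eq_right hrle]
    -- continuity of x ↦ W (c x)
    have hprod := hVtprod hr hε₁lt
    obtain ⟨Cb, hCb⟩ := ((isCompact_Icc (a := r) (b := ε₁)).prod
      (isCompact_Icc (a := (0:ℝ)) (b := 2*π))).exists_bound_of_continuousOn
      (hprod.mono (Set.prod_mono subset_rfl (Set.subset_univ _)))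
    have hWcCont : Continuous (fun x => W (c x)) := by
      have hμ : (volume.restrict (Set.Ioc (0:ℝ) (2*π))) (Set.univ) < ⊤ := by
        rw [Measure.restrict_apply_univ]
        exact measure_Ioc_lt_top
      have hcont : Continuous (fun x => ∫ θ in Set.Ioc (0:ℝ) (2*π),
          Vt (circleMap 0 (c x) θ) ∂volume) := by
        apply continuous_of_dominated (bound := fun _ => Cb)
        · intro x
          have : Continuous (fun θ => Vt (circleMap 0 (c x) θ)) := by
            refine hprod.comp_continuous (continuous_const.prodMk continuous_id) ?_
            exact fun θ => ⟨hcmem x, Set.mem_univ _⟩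
          exact this.aestronglyMeasurable
        · intro x
          filter_upwards [ae_restrict_mem measurableSet_Ioc] with θ hθ
          exact hCb (c x, θ) ⟨hcmem x, ⟨le_of_lt hθ.1, hθ.2⟩⟩
        · exact integrable_const Cb
        · filter_upwards with θ
          refine hprod.comp_continuous (hccont.prodMk continuous_const) ?_
          exact fun x => ⟨hcmem x, Set.mem_univ _⟩
      have : (fun x => W (c x)) = fun x => ∫ θ in Set.Ioc (0:ℝ) (2*π),
          Vt (circleMap 0 (c x) θ) ∂volume := by
        funext x
        rw [hWdef]
        exact intervalIntegral.integral_of_le (by positivity)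
      rw [this]
      exact hcont
    -- integer values and the intermediate value theorem
    have hval : ∀ x, ∃ k : ℤ, W (c x) = 2*π*k := fun x =>
      hWint (hcIoo x).1 (hcIoo x).2
    obtain ⟨kr, hkr⟩ := hval r
    obtain ⟨ks, hks⟩ := hval ε₁
    have hcontIcc : ContinuousOn (fun x => W (c x)) (Set.Icc r ε₁) :=
      hWcCont.continuousOn
    have hkey2 : kr = ks := by
      by_contra hne
      rcases lt_or_gt_of_ne hne with hlt | hgt
      · have hy : 2*π*kr + π ∈ Set.Icc (W (c r)) (W (c ε₁)) := by
          rw [hkr, hks]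
          constructor
          · nlinarith
          · have : (kr:ℝ) + 1 ≤ ks := by exact_mod_cast hlt
            nlinarith
        obtain ⟨x, _, hx⟩ := intermediate_value_Icc hrle hcontIcc hy
        obtain ⟨k, hk⟩ := hval x
        have hx' : W (c x) = 2*π*kr + π := hx
        rw [hk] at hx'
        have : (2*(k:ℝ)) = 2*kr + 1 := by
          have hπ : π ≠ 0 := ne_of_gt pi_pos
          apply mul_left_cancel₀ hπ
          linarith [hx']
        have : 2*k = 2*kr + 1 := by exact_mod_cast this
        omega
      · have hy : 2*π*ks + π ∈ Set.Icc (W (c ε₁)) (W (c r)) := by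
          rw [hkr, hks]
          constructor
          · nlinarith
          · have : (ks:ℝ) + 1 ≤ kr := by exact_mod_cast hgt
            nlinarith
        obtain ⟨x, _, hx⟩ := intermediate_value_Icc' hrle hcontIcc hy
        obtain ⟨k, hk⟩ := hval x
        have hx' : W (c x) = 2*π*ks + π := hx
        rw [hk] at hx'
        have : (2*(k:ℝ)) = 2*ks + 1 := by
          have hπ : π ≠ 0 := ne_of_gt pi_pos
          apply mul_left_cancel₀ hπ
          linarith [hx']
        have : 2*k = 2*ks + 1 := by exact_mod_cast this
        omega
    rw [← hcr, ← hcε₁, hkr, hks, hkey2]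
  -- continuity of L along circles
  have hLcirc : ∀ {s : ℝ}, 0 < s → s < ε₀ → Continuous (fun θ => L (circleMap 0 s θ)) := by
    intro s hs hs'
    have hgc : Continuous (fun θ => g (circleMap 0 s θ)) :=
      hContg.comp_continuous (continuous_circleMap 0 s) (fun θ => hmemV hs hs' θ)
    have habs : Continuous (fun θ => (‖g (circleMap 0 s θ)‖)^2) :=
      (continuous_norm.comp hgc).pow 2
    refine habs.log ?_
    intro θ
    exact pow_ne_zero 2 (norm_ne_zero_iff.mpr (hgne _ (hmemV hs hs' θ)))
  -- derivative of the circle average M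
  have hMd : ∀ {r : ℝ}, 0 < r → r < ε₀ →
      HasDerivAt M (∫ θ in (0:ℝ)..(2*π), Pf r θ) r := by
    intro r hr hr'
    set a' : ℝ := r/2 with ha'def
    set b' : ℝ := (r + ε₀)/2 with hb'def
    have ha' : 0 < a' := by rw [ha'def]; positivity
    have hb' : b' < ε₀ := by rw [hb'def]; linarith
    set δ : ℝ := min (r/2) ((ε₀ - r)/2) with hδdef
    have hδpos : 0 < δ := lt_min (by positivity) (by linarith)
    have hball : Metric.ball r δ ⊆ Set.Icc a' b' := by
      intro x hx
      rw [Metric.mem_ball, Real.dist_eq, abs_sub_lt_iff] at hx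
      have h1 : δ ≤ r/2 := min_le_left _ _
      have h2 : δ ≤ (ε₀ - r)/2 := min_le_right _ _
      constructor
      · rw [ha'def]; linarith
      · rw [hb'def]; linarith
    obtain ⟨Cb, hCb⟩ := ((isCompact_Icc (a := a') (b := b')).prod
      (isCompact_Icc (a := (0:ℝ)) (b := 2*π))).exists_bound_of_continuousOn
      ((hPfprod ha' hb').mono (Set.prod_mono subset_rfl (Set.subset_univ _)))
    have hIccsub : Set.Icc a' b' ⊆ Set.Ioo 0 ε₀ := fun x hx =>
      ⟨lt_of_lt_of_le ha' hx.1, lt_of_le_of_lt hx.2 hb'⟩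
    have hPfθ : Continuous (fun θ => Pf r θ) := by
      refine (hPfprod ha' hb').comp_continuous
        (continuous_const.prodMk continuous_id) ?_
      exact fun θ => ⟨⟨by rw [ha'def]; linarith, by rw [hb'def]; linarith⟩, Set.mem_univ _⟩
    refine (intervalIntegral.hasDerivAt_integral_of_dominated_loc_of_deriv_le
      (F := fun s θ => L (circleMap 0 s θ)) (F' := fun s θ => Pf s θ)
      (a := 0) (b := 2*π) (x₀ := r) (bound := fun _ => Cb) (Metric.ball_mem_nhds r hδpos)
      ?_ ?_ ?_ ?_ ?_ ?_).2
    · filter_upwards [Metric.ball_mem_nhds r hδpos] with x hx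
      have hmem := hIccsub (hball hx)
      exact (hLcirc hmem.1 hmem.2).aestronglyMeasurable
    · exact (hLcirc hr hr').intervalIntegrable _ _
    · exact hPfθ.aestronglyMeasurable
    · filter_upwards with t
      intro ht x hx
      have hmem := hball hx
      have htIcc : t ∈ Set.Icc (0:ℝ) (2*π) := by
        rw [Set.uIoc_of_le (by positivity : (0:ℝ) ≤ 2*π)] at ht
        exact ⟨le_of_lt ht.1, ht.2⟩
      simpa [Real.norm_eq_abs] using hCb (x, t) ⟨hmem, htIcc⟩
    · exact intervalIntegrable_const
    · filter_upwards with t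
      intro ht x hx
      have hmem := hIccsub (hball hx)
      exact hLr hmem.1 hmem.2 t
  -- the ODE-type bound for the derivative of M
  have hMb : ∀ {r : ℝ}, 0 < r → r ≤ ε₁ →
      |r * (∫ θ in (0:ℝ)..(2*π), Pf r θ) + 2 * W ε₁| ≤ 8*π*Δ := by
    intro r hr hrle
    have hr' : r < ε₀ := lt_of_le_of_lt hrle hε₁lt
    have hVtc : Continuous (fun θ => Vt (circleMap 0 r θ)) :=
      Complex.continuous_im.comp (hqcont hr hr')
    have hPfc : Continuous (fun θ => Pf r θ) := by
      refine (hPfprod (a := r/2) (b := r) (by positivity) hr').comp_continuous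
        (continuous_const.prodMk continuous_id) ?_
      exact fun θ => ⟨⟨by linarith, le_rfl⟩, Set.mem_univ _⟩
    have hφc : Continuous (fun θ =>
        (circleMap 0 r θ * wirtingerDeriv g (circleMap 0 r θ) / g (circleMap 0 r θ)).re) :=
      Complex.continuous_re.comp (hφC.comp_continuous (continuous_circleMap 0 r)
        (fun θ => hmemV hr hr' θ))
    rw [← hWconst hr hrle]
    have h3 : r * (∫ θ in (0:ℝ)..(2*π), Pf r θ) + 2 * W r
        = ∫ θ in (0:ℝ)..(2*π), (r * Pf r θ + 2 * Vt (circleMap 0 r θ)) := by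
      rw [hWdef]
      rw [← intervalIntegral.integral_const_mul, ← intervalIntegral.integral_const_mul,
        ← intervalIntegral.integral_add ((show Continuous (fun θ => r * Pf r θ) from continuous_const.mul hPfc).intervalIntegrable _ _)
          ((show Continuous (fun θ => 2 * Vt (circleMap 0 r θ)) from continuous_const.mul hVtc).intervalIntegrable _ _)]
    rw [h3]
    have h4 : (fun θ => r * Pf r θ + 2 * Vt (circleMap 0 r θ))
        = fun θ => 4 * (circleMap 0 r θ * wirtingerDeriv g (circleMap 0 r θ)
            / g (circleMap 0 r θ)).re := by
      funext θ; exact hkey hr hr' θ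
    rw [h4]
    calc |∫ θ in (0:ℝ)..(2*π), 4 * (circleMap 0 r θ * wirtingerDeriv g (circleMap 0 r θ)
            / g (circleMap 0 r θ)).re|
        ≤ ∫ θ in (0:ℝ)..(2*π), |4 * (circleMap 0 r θ * wirtingerDeriv g (circleMap 0 r θ)
            / g (circleMap 0 r θ)).re| :=
          intervalIntegral.abs_integral_le_integral_abs (by positivity)
      _ ≤ ∫ θ in (0:ℝ)..(2*π), 4*Δ := by
          apply intervalIntegral.integral_mono_on (by positivity)
            ((continuous_const.mul hφc).abs.intervalIntegrable _ _)
            (intervalIntegrable_const)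
          intro θ _
          have hmem := hmemV hr hr' θ
          have habs : ‖circleMap 0 r θ‖ ≤ ε₁ := by
            rw [norm_circleMap_zero, abs_of_pos hr]; exact hrle
          have := hΔb _ hmem habs
          simp only [Pi.mul_apply]; rw [abs_mul]
          calc |(4:ℝ)| * |(circleMap 0 r θ * wirtingerDeriv g (circleMap 0 r θ)
              / g (circleMap 0 r θ)).re|
              ≤ 4 * ‖circleMap 0 r θ * wirtingerDeriv g (circleMap 0 r θ)
                / g (circleMap 0 r θ)‖ := by
                rw [abs_of_nonneg (by norm_num : (0:ℝ) ≤ 4)]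
                exact mul_le_mul_of_nonneg_left (Complex.abs_re_le_norm _) (by norm_num)
            _ ≤ 4 * Δ := mul_le_mul_of_nonneg_left this (by norm_num)
      _ = 8*π*Δ := by
          rw [intervalIntegral.integral_const]
          simp
          ring
  -- integrate the bound: |M ε - M ε₁| ≤ C₂ (log ε₁ - log ε)
  set C₂ : ℝ := 2*|W ε₁| + 8*π*Δ with hC₂def
  have hC₂0 : 0 ≤ C₂ := by
    rw [hC₂def]; positivity
  have hMdiff : ∀ {ε : ℝ}, 0 < ε → ε ≤ ε₁ →
      |M ε - M ε₁| ≤ C₂ * (Real.log ε₁ - Real.log ε) := by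
    intro ε hε hεle
    have hIccsub : Set.Icc ε ε₁ ⊆ Set.Ioo 0 ε₀ := fun x hx =>
      ⟨lt_of_lt_of_le hε hx.1, lt_of_le_of_lt hx.2 hε₁lt⟩
    have hder : ∀ x ∈ Set.Icc ε ε₁,
        0 ≤ (∫ θ in (0:ℝ)..(2*π), Pf x θ) + C₂ * x⁻¹ ∧
        0 ≤ C₂ * x⁻¹ - (∫ θ in (0:ℝ)..(2*π), Pf x θ) := by
      intro x hx
      have hx0 : 0 < x := lt_of_lt_of_le hε hx.1
      have hb := abs_le.mp (hMb hx0 hx.2)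
      have hW1 : -|W ε₁| ≤ W ε₁ := neg_abs_le _
      have hW2 : W ε₁ ≤ |W ε₁| := le_abs_self _
      have hnum1 : 0 ≤ x * (∫ θ in (0:ℝ)..(2*π), Pf x θ) + C₂ := by
        rw [hC₂def]; linarith [hb.1]
      have hnum2 : 0 ≤ C₂ - x * (∫ θ in (0:ℝ)..(2*π), Pf x θ) := by
        rw [hC₂def]; linarith [hb.2]
      constructor
      · have := div_nonneg hnum1 hx0.le
        have heq : (x * (∫ θ in (0:ℝ)..(2*π), Pf x θ) + C₂) / x
            = (∫ θ in (0:ℝ)..(2*π), Pf x θ) + C₂ * x⁻¹ := by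
          field_simp
        rwa [heq] at this
      · have := div_nonneg hnum2 hx0.le
        have heq : (C₂ - x * (∫ θ in (0:ℝ)..(2*π), Pf x θ)) / x
            = C₂ * x⁻¹ - (∫ θ in (0:ℝ)..(2*π), Pf x θ) := by
          field_simp
        rwa [heq] at this
    have hmono1 : MonotoneOn (fun s => M s + C₂ * Real.log s) (Set.Icc ε ε₁) := by
      apply monotoneOn_of_deriv_nonneg (convex_Icc _ _)
      · intro x hx
        have hm := hIccsub hx
        exact ((hMd hm.1 hm.2).add
          ((Real.hasDerivAt_log (ne_of_gt hm.1)).const_mul C₂)).continuousAt.continuousWithinAt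
      · rw [interior_Icc]
        intro x hx
        have hm := hIccsub (Set.Ioo_subset_Icc_self hx)
        exact ((hMd hm.1 hm.2).add
          ((Real.hasDerivAt_log (ne_of_gt hm.1)).const_mul C₂)).differentiableAt.differentiableWithinAt
      · rw [interior_Icc]
        intro x hx
        have hm := hIccsub (Set.Ioo_subset_Icc_self hx)
        rw [show deriv (fun s => M s + C₂ * Real.log s) x = _ from ((hMd hm.1 hm.2).add
          ((Real.hasDerivAt_log (ne_of_gt hm.1)).const_mul C₂)).deriv]
        exact (hder x (Set.Ioo_subset_Icc_self hx)).1
    have hmono2 : MonotoneOn (fun s => C₂ * Real.log s - M s) (Set.Icc ε ε₁) := by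
      apply monotoneOn_of_deriv_nonneg (convex_Icc _ _)
      · intro x hx
        have hm := hIccsub hx
        exact (((Real.hasDerivAt_log (ne_of_gt hm.1)).const_mul C₂).sub
          (hMd hm.1 hm.2)).continuousAt.continuousWithinAt
      · rw [interior_Icc]
        intro x hx
        have hm := hIccsub (Set.Ioo_subset_Icc_self hx)
        exact (((Real.hasDerivAt_log (ne_of_gt hm.1)).const_mul C₂).sub
          (hMd hm.1 hm.2)).differentiableAt.differentiableWithinAt
      · rw [interior_Icc]
        intro x hx
        have hm := hIccsub (Set.Ioo_subset_Icc_self hx)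
        rw [show deriv (fun s => C₂ * Real.log s - M s) x = _ from (((Real.hasDerivAt_log (ne_of_gt hm.1)).const_mul C₂).sub
          (hMd hm.1 hm.2)).deriv]
        exact (hder x (Set.Ioo_subset_Icc_self hx)).2
    have hεmem : ε ∈ Set.Icc ε ε₁ := ⟨le_rfl, hεle⟩
    have hε₁mem : ε₁ ∈ Set.Icc ε ε₁ := ⟨hεle, le_rfl⟩
    have h1 := hmono1 hεmem hε₁mem hεle
    have h2 := hmono2 hεmem hε₁mem hεle
    simp only at h1 h2
    rw [abs_le]
    constructor <;> [linarith; linarith]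
  -- positivity of B and the bound on L
  have hz₀ : circleMap 0 ε₁ 0 ∈ Metric.closedBall (0:ℂ) ε₀ \ {0} :=
    hVsub (hmemV hε₁pos hε₁lt 0)
  have hB : 0 < B := lt_of_lt_of_le (norm_pos_iff.mpr (hg0 _ hz₀)) (hgB _ hz₀)
  set Kb : ℝ := |2 * Real.log B| with hKbdef
  have hKb0 : 0 ≤ Kb := abs_nonneg _
  have hLabs : ∀ z ∈ V, |L z| ≤ 2*Kb - L z := by
    intro z hz
    have h1 : L z ≤ 2 * Real.log B := by
      rw [hLdef]
      have hle : (‖g z‖)^2 ≤ B^2 :=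
        pow_le_pow_left₀ (norm_nonneg _) (hgB z (hVsub hz)) 2
      have hpos : (0:ℝ) < (‖g z‖)^2 :=
        pow_pos (norm_pos_iff.mpr (hgne z hz)) 2
      calc Real.log ((‖g z‖)^2) ≤ Real.log (B^2) := Real.log_le_log hpos hle
        _ = 2 * Real.log B := by rw [Real.log_pow]; push_cast; ring
    have h2 : L z ≤ Kb := le_trans h1 (le_abs_self _)
    rcases abs_cases (L z) with ⟨he, _⟩ | ⟨he, _⟩ <;> linarith
  -- bound on the derivative of f on the closed disk
  have hfC : ContinuousOn (fderiv ℝ f) U := hf.continuousOn_fderiv_of_isOpen hU (by simp)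
  obtain ⟨Cf0, hCf0⟩ := (isCompact_closedBall (0:ℂ) ε₀).exists_bound_of_continuousOn
    (hfC.mono hUsub)
  set Cf : ℝ := max Cf0 0 with hCfdef
  have hCf : ∀ z ∈ Metric.closedBall (0:ℂ) ε₀, ‖fderiv ℝ f z‖ ≤ Cf := fun z hz =>
    le_trans (by simpa using hCf0 z hz) (le_max_left _ _)
  have hCfpos : 0 ≤ Cf := le_max_right _ _
  have hcircmem : ∀ {r : ℝ}, 0 < r → r < ε₀ → ∀ θ : ℝ,
      circleMap 0 r θ ∈ Metric.closedBall (0:ℂ) ε₀ := by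
    intro r hr hr' θ
    simp only [Metric.mem_closedBall, dist_zero_right,
      norm_circleMap_zero, abs_of_pos hr]
    exact le_of_lt hr'
  -- the main estimate
  set A1 : ℝ := 4*π*Kb + |M ε₁| + C₂ * Real.log ε₁ with hA1def
  have hmain : ∀ {ε : ℝ}, 0 < ε → ε < ε₁ →
      |∫ θ in (0:ℝ)..(2*π), f (↑ε * Complex.exp (↑θ * Complex.I)) *
          deriv (fun t : ℝ =>
            Real.log ((‖g (↑ε * Complex.exp (↑t * Complex.I))‖)^2)) θ|
        ≤ Cf * ε * (A1 - C₂ * Real.log ε) := by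
    intro ε hε hεlt
    have hε' : ε < ε₀ := lt_trans hεlt hε₁lt
    have hfun : (fun θ : ℝ => f (↑ε * Complex.exp (↑θ * Complex.I)) *
        deriv (fun t : ℝ =>
          Real.log ((‖g (↑ε * Complex.exp (↑t * Complex.I))‖)^2)) θ)
        = fun θ => f (circleMap 0 ε θ) * Lt (circleMap 0 ε θ) := by
      funext θ
      have hc : ∀ t : ℝ, (↑ε * Complex.exp (↑t * Complex.I)) = circleMap 0 ε t := by
        intro t; simp [circleMap]
      have hfn : (fun t : ℝ =>
          Real.log ((‖g (↑ε * Complex.exp (↑t * Complex.I))‖)^2))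
          = fun t => L (circleMap 0 ε t) := by
        funext t; rw [hc t]
      rw [hfn, (hLd hε hε' θ).deriv, hc θ]
    rw [hfun]
    set u' : ℝ → ℝ := fun θ =>
      (fderiv ℝ f (circleMap 0 ε θ)) (circleMap 0 ε θ * Complex.I) with hu'def
    have hUmem : ∀ θ : ℝ, circleMap 0 ε θ ∈ U := fun θ => hUsub (hcircmem hε hε' θ)
    have hud : ∀ θ : ℝ, HasDerivAt (fun t => f (circleMap 0 ε t)) (u' θ) θ := fun θ =>
      ((hf.contDiffAt (hU.mem_nhds (hUmem θ))).differentiableAt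
        (by simp)).hasFDerivAt.comp_hasDerivAt θ (hasDerivAt_circleMap 0 ε θ)
    have hu'cont : Continuous u' :=
      (hfC.comp_continuous (continuous_circleMap 0 ε) hUmem).clm_apply
        ((continuous_circleMap 0 ε).mul continuous_const)
    have hLtcont : Continuous (fun θ => Lt (circleMap 0 ε θ)) :=
      continuous_const.mul (Complex.continuous_re.comp (hqcont hε hε'))
    have hvcont : Continuous (fun θ => L (circleMap 0 ε θ)) := hLcirc hε hε'
    have hibp := intervalIntegral.integral_mul_deriv_eq_deriv_mul
      (a := (0:ℝ)) (b := 2*π)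
      (u := fun θ => f (circleMap 0 ε θ)) (u' := u')
      (v := fun θ => L (circleMap 0 ε θ)) (v' := fun θ => Lt (circleMap 0 ε θ))
      (fun θ _ => hud θ) (fun θ _ => hLd hε hε' θ)
      (hu'cont.intervalIntegrable _ _) (hLtcont.intervalIntegrable _ _)
    have hper : circleMap 0 ε (2*π) = circleMap 0 ε 0 := by
      have := periodic_circleMap 0 ε 0
      simpa using this
    have heq : (∫ θ in (0:ℝ)..(2*π), f (circleMap 0 ε θ) * Lt (circleMap 0 ε θ))
        = -∫ θ in (0:ℝ)..(2*π), u' θ * L (circleMap 0 ε θ) := by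
      rw [hibp]
      simp only [hper]
      ring
    rw [heq, abs_neg]
    have habs : |∫ θ in (0:ℝ)..(2*π), u' θ * L (circleMap 0 ε θ)|
        ≤ ∫ θ in (0:ℝ)..(2*π), |u' θ * L (circleMap 0 ε θ)| :=
      intervalIntegral.abs_integral_le_integral_abs (by positivity)
    have hptw : ∀ θ ∈ Set.Icc (0:ℝ) (2*π),
        |u' θ * L (circleMap 0 ε θ)| ≤ Cf * ε * (2*Kb - L (circleMap 0 ε θ)) := by
      intro θ _
      have h1 : |u' θ| ≤ Cf * ε := by
        rw [hu'def]
        have hop := (fderiv ℝ f (circleMap 0 ε θ)).le_opNorm (circleMap 0 ε θ * Complex.I)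
        have hnorm : ‖circleMap 0 ε θ * Complex.I‖ = ε := by
          simp [norm_mul, norm_circleMap_zero, abs_of_pos hε]
        rw [hnorm] at hop
        calc |(fderiv ℝ f (circleMap 0 ε θ)) (circleMap 0 ε θ * Complex.I)|
            ≤ ‖fderiv ℝ f (circleMap 0 ε θ)‖ * ε := by
              simpa [Real.norm_eq_abs] using hop
          _ ≤ Cf * ε := mul_le_mul_of_nonneg_right (hCf _ (hcircmem hε hε' θ)) hε.le
      have h2 : |L (circleMap 0 ε θ)| ≤ 2*Kb - L (circleMap 0 ε θ) :=
        hLabs _ (hmemV hε hε' θ)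
      calc |u' θ * L (circleMap 0 ε θ)| = |u' θ| * |L (circleMap 0 ε θ)| := abs_mul _ _
        _ ≤ (Cf * ε) * (2*Kb - L (circleMap 0 ε θ)) :=
            mul_le_mul h1 h2 (abs_nonneg _) (by positivity)
    have hint1 : IntervalIntegrable (fun θ => |u' θ * L (circleMap 0 ε θ)|)
        volume 0 (2*π) := ((hu'cont.mul hvcont).abs).intervalIntegrable _ _
    have hint2 : IntervalIntegrable (fun θ => Cf * ε * (2*Kb - L (circleMap 0 ε θ)))
        volume 0 (2*π) :=
      (continuous_const.mul (continuous_const.sub hvcont)).intervalIntegrable _ _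
    have hmono := intervalIntegral.integral_mono_on (by positivity) hint1 hint2 hptw
    have hRHS : (∫ θ in (0:ℝ)..(2*π), Cf * ε * (2*Kb - L (circleMap 0 ε θ)))
        = Cf * ε * (4*π*Kb - M ε) := by
      rw [intervalIntegral.integral_const_mul]
      congr 1
      rw [intervalIntegral.integral_sub intervalIntegrable_const
        (hvcont.intervalIntegrable _ _), intervalIntegral.integral_const, hMdef]
      simp
      ring
    have hM := abs_le.mp (hMdiff hε (le_of_lt hεlt))
    calc |∫ θ in (0:ℝ)..(2*π), u' θ * L (circleMap 0 ε θ)|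
        ≤ ∫ θ in (0:ℝ)..(2*π), |u' θ * L (circleMap 0 ε θ)| := habs
      _ ≤ ∫ θ in (0:ℝ)..(2*π), Cf * ε * (2*Kb - L (circleMap 0 ε θ)) := hmono
      _ = Cf * ε * (4*π*Kb - M ε) := hRHS
      _ ≤ Cf * ε * (A1 - C₂ * Real.log ε) := by
          apply mul_le_mul_of_nonneg_left _ (by positivity : (0:ℝ) ≤ Cf * ε)
          have hMe : -(M ε) ≤ -(M ε₁) + C₂ * (Real.log ε₁ - Real.log ε) := by
            linarith [hM.1]
          have hMa : -(M ε₁) ≤ |M ε₁| := neg_le_abs _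
          rw [hA1def]
          linarith
  -- pass to the limit
  have ht1 : Tendsto (fun ε : ℝ => ε) (nhdsWithin 0 (Set.Ioo 0 ε₀)) (nhds 0) :=
    tendsto_id.mono_left nhdsWithin_le_nhds
  have ht2 : Tendsto (fun ε : ℝ => ε * Real.log ε)
      (nhdsWithin 0 (Set.Ioo 0 ε₀)) (nhds 0) := by
    have h := tendsto_log_mul_rpow_nhdsGT_zero one_pos
    have h' : Tendsto (fun x : ℝ => Real.log x * x) (nhdsWithin 0 (Set.Ioi 0)) (nhds 0) := by
      simpa [Real.rpow_one] using h
    have h'' := h'.mono_left (nhdsWithin_mono 0 (Set.Ioo_subset_Ioi_self : Set.Ioo (0:ℝ) ε₀ ⊆ Set.Ioi 0))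
    simpa [mul_comm] using h''
  have htb : Tendsto (fun ε : ℝ => Cf * ε * (A1 - C₂ * Real.log ε))
      (nhdsWithin 0 (Set.Ioo 0 ε₀)) (nhds 0) := by
    have hrw : (fun ε : ℝ => Cf * ε * (A1 - C₂ * Real.log ε))
        = fun ε => (Cf * A1) * ε - (Cf * C₂) * (ε * Real.log ε) := by
      funext ε; ring
    rw [hrw]
    have := (ht1.const_mul (Cf*A1)).sub (ht2.const_mul (Cf*C₂))
    simpa using this
  refine squeeze_zero_norm' ?_ htb
  filter_upwards [eventually_mem_nhdsWithin,
    (eventually_lt_nhds hε₁pos).filter_mono nhdsWithin_le_nhds] with ε hεmem hεlt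
  simpa [Real.norm_eq_abs] using hmain hεmem.1 hεlt
end
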